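/- Let E be a metric space, let p, q, w : ℕ → E, and let r₁, r₂ ≥ 0. Let a ≤ x ≤ y ≤ b, c ≤ d, and u ≤ v be natural numbers. If the discrete Fréchet distance of p on [a,b] and q on [c,d] is at most r₁, and the discrete Fréchet distance of p on [x,y] and w on [u,v] is at most r₂, then there exist natural numbers c', d' with c ≤ c' ≤ d' ≤ d such that the discrete Fréchet distance of q on [c',d'] and w on [u,v] is at most r₁ + r₂. -/
import Mathlib


/-- A coupling of `p` on `[a,b]` with `q` on `[c,d]`: a finite sequence of index
pairs starting at `(a,c)`, ending at `(b,d)`, where each step increments the first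
index, the second index, or both, by one. -/
def IsCoupling (a b c d : ℕ) (K : ℕ) (σ : ℕ → ℕ × ℕ) : Prop :=
  σ 0 = (a, c) ∧ σ K = (b, d) ∧
  ∀ k < K, σ (k+1) = ((σ k).1 + 1, (σ k).2) ∨
           σ (k+1) = ((σ k).1, (σ k).2 + 1) ∨
           σ (k+1) = ((σ k).1 + 1, (σ k).2 + 1)

/-- The discrete Fréchet distance of `p` on `[a,b]` and `q` on `[c,d]` is at most
`r`: there is a coupling all of whose matched pairs are within distance `r`. -/
def DiscreteFrechetLE {E : Type*} [PseudoMetricSpace E] (p q : ℕ → E)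
    (a b c d : ℕ) (r : ℝ) : Prop :=
  ∃ (K : ℕ) (σ : ℕ → ℕ × ℕ), IsCoupling a b c d K σ ∧
    ∀ k ≤ K, dist (p (σ k).1) (q (σ k).2) ≤ r

/-- Step dichotomy of a coupling, in coordinate form. -/
lemma coupling_step {a b c d K : ℕ} {σ : ℕ → ℕ × ℕ}
    (h : IsCoupling a b c d K σ) {k : ℕ} (hk : k < K) :
    ((σ (k+1)).1 = (σ k).1 + 1 ∧ (σ (k+1)).2 = (σ k).2) ∨
    ((σ (k+1)).1 = (σ k).1 ∧ (σ (k+1)).2 = (σ k).2 + 1) ∨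
    ((σ (k+1)).1 = (σ k).1 + 1 ∧ (σ (k+1)).2 = (σ k).2 + 1) := by
  rcases h.2.2 k hk with h' | h' | h' <;> simp [h']

/-- Both coordinates of a coupling are monotone. -/
lemma coupling_mono {a b c d K : ℕ} {σ : ℕ → ℕ × ℕ}
    (h : IsCoupling a b c d K σ) {m n : ℕ} (hmn : m ≤ n) (hn : n ≤ K) :
    (σ m).1 ≤ (σ n).1 ∧ (σ m).2 ≤ (σ n).2 := by
  induction n with
  | zero =>
    have : m = 0 := by omega
    subst this; exact ⟨le_rfl, le_rfl⟩
  | succ n ih =>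
    rcases Nat.eq_or_lt_of_le hmn with rfl | hmn'
    · exact ⟨le_rfl, le_rfl⟩
    · have h1 := ih (by omega) (by omega)
      rcases coupling_step h (show n < K by omega) with hs | hs | hs <;>
        exact ⟨by omega, by omega⟩

/-- Intermediate value property for the first coordinate of a coupling. -/
lemma coupling_exists_fst {a b c d K : ℕ} {σ : ℕ → ℕ × ℕ}
    (h : IsCoupling a b c d K σ) {t : ℕ} (hat : a ≤ t) (htb : t ≤ b) :
    ∃ m, m ≤ K ∧ (σ m).1 = t := by
  classical
  have hK : t ≤ (σ K).1 := by rw [h.2.1]; exact htb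
  have hex : ∃ m, t ≤ (σ m).1 := ⟨K, hK⟩
  refine ⟨Nat.find hex, Nat.find_min' hex hK, ?_⟩
  have hm1 : t ≤ (σ (Nat.find hex)).1 := Nat.find_spec hex
  rcases Nat.eq_zero_or_pos (Nat.find hex) with h0 | hpos
  · rw [h0] at hm1 ⊢
    have : (σ 0).1 = a := by rw [h.1]
    omega
  · obtain ⟨m', hm'⟩ : ∃ m', Nat.find hex = m' + 1 :=
      ⟨Nat.find hex - 1, by omega⟩
    have hmin : ¬ t ≤ (σ m').1 := Nat.find_min hex (by omega)
    have hm'K : m' < K := by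
      have := Nat.find_min' hex hK
      omega
    rw [hm'] at hm1 ⊢
    rcases coupling_step h hm'K with hs | hs | hs <;> omega

/-- A "weak coupling" (allowing stationary steps) within distance `r` can be
turned into a genuine coupling: so it witnesses `DiscreteFrechetLE`. -/
lemma weak_frechet {E : Type*} [PseudoMetricSpace E] (q w : ℕ → E) (r : ℝ) (b d : ℕ) :
    ∀ (K : ℕ) (σ : ℕ → ℕ × ℕ) (a c : ℕ), σ 0 = (a, c) → σ K = (b, d) →
    (∀ k < K, σ (k+1) = σ k ∨ σ (k+1) = ((σ k).1 + 1, (σ k).2) ∨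
      σ (k+1) = ((σ k).1, (σ k).2 + 1) ∨ σ (k+1) = ((σ k).1 + 1, (σ k).2 + 1)) →
    (∀ k ≤ K, dist (q (σ k).1) (w (σ k).2) ≤ r) →
    DiscreteFrechetLE q w a b c d r := by
  intro K
  induction K with
  | zero =>
    intro σ a c h0 hK hs hd
    have hbd : (a, c) = (b, d) := h0.symm.trans hK
    obtain ⟨rfl, rfl⟩ : a = b ∧ c = d := by simpa [Prod.ext_iff] using hbd
    refine ⟨0, fun _ => (a, c), ⟨rfl, rfl, by omega⟩, fun k hk => ?_⟩
    have : k = 0 := by omega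
    subst this
    have := hd 0 le_rfl
    rwa [h0] at this
  | succ K ih =>
    intro σ a c h0 hK hs hd
    rcases hs 0 (Nat.succ_pos K) with h1 | hstep0
    · exact ih (fun t => σ (t+1)) a c (h1.trans h0) hK
        (fun k hk => hs (k+1) (by omega)) (fun k hk => hd (k+1) (by omega))
    · obtain ⟨K', τ, ⟨hτ0, hτK, hτs⟩, hτd⟩ :=
        ih (fun t => σ (t+1)) (σ 1).1 (σ 1).2 Prod.mk.eta.symm hK
          (fun k hk => hs (k+1) (by omega)) (fun k hk => hd (k+1) (by omega))
      refine ⟨K'+1, fun t => if t = 0 then (a, c) else τ (t-1), ⟨rfl, by simpa using hτK, ?_⟩,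
        ?_⟩
      · intro k hk
        rcases Nat.eq_zero_or_pos k with rfl | hpos
        · simp only [if_pos rfl, Nat.zero_add, if_neg (Nat.one_ne_zero), Nat.sub_self]
          rw [hτ0]
          rw [h0] at hstep0
          simpa using hstep0
        · obtain ⟨j, rfl⟩ : ∃ j, k = j + 1 := ⟨k - 1, by omega⟩
          simp only [if_neg (Nat.succ_ne_zero j), if_neg (Nat.succ_ne_zero (j+1)),
            Nat.add_sub_cancel]
          exact hτs j (by omega)
      · intro k hk
        rcases Nat.eq_zero_or_pos k with rfl | hpos
        · simp only [if_pos rfl]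
          have := hd 0 (by omega)
          rwa [h0] at this
        · obtain ⟨j, rfl⟩ : ∃ j, k = j + 1 := ⟨k - 1, by omega⟩
          simp only [if_neg (Nat.succ_ne_zero j), Nat.add_sub_cancel]
          exact hτd j (by omega)

theorem discrete_frechet_subcurve_triangle {E : Type*} [MetricSpace E]
    (p q w : ℕ → E) (r₁ r₂ : ℝ) (hr₁ : 0 ≤ r₁) (hr₂ : 0 ≤ r₂)
    (a x y b c d u v : ℕ)
    (hax : a ≤ x) (hxy : x ≤ y) (hyb : y ≤ b) (hcd : c ≤ d) (huv : u ≤ v)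
    (H₁ : DiscreteFrechetLE p q a b c d r₁)
    (H₂ : DiscreteFrechetLE p w x y u v r₂) :
    ∃ c' d' : ℕ, c ≤ c' ∧ c' ≤ d' ∧ d' ≤ d ∧
      DiscreteFrechetLE q w c' d' u v (r₁ + r₂) := by
  classical
  obtain ⟨K₁, σ, hσ, hσd⟩ := H₁
  obtain ⟨K₂, τ, hτ, hτd⟩ := H₂
  obtain ⟨m₀, hm₀K, hm₀x⟩ := coupling_exists_fst hσ hax (hxy.trans hyb)
  set F : ℕ × ℕ → ℕ × ℕ := fun s =>
    if s.2 < K₂ then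
      if (τ (s.2+1)).1 = (τ s.2).1 then (s.1, s.2+1)
      else if (σ (s.1+1)).1 = (σ s.1).1 then (s.1+1, s.2)
      else (s.1+1, s.2+1)
    else s with hF
  set ρ : ℕ → ℕ × ℕ := fun t => F^[t] (m₀, 0) with hρdef
  have hρ0 : ρ 0 = (m₀, 0) := rfl
  have hρs : ∀ t, ρ (t+1) = F (ρ t) := fun t => Function.iterate_succ_apply' F t _
  have hFeq : ∀ s : ℕ × ℕ, F s =
      if s.2 < K₂ then
        if (τ (s.2+1)).1 = (τ s.2).1 then (s.1, s.2+1)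
        else if (σ (s.1+1)).1 = (σ s.1).1 then (s.1+1, s.2)
        else (s.1+1, s.2+1)
      else s := fun s => rfl
  have hσKb : (σ K₁).1 = b := by rw [hσ.2.1]
  have hσ0c : (σ 0).2 = c := by rw [hσ.1]
  have hσKd : (σ K₁).2 = d := by rw [hσ.2.1]
  have hτ0u : (τ 0).2 = u := by rw [hτ.1]
  have hτ0x : (τ 0).1 = x := by rw [hτ.1]
  have hτKy : (τ K₂).1 = y := by rw [hτ.2.1]
  have hτKv : (τ K₂).2 = v := by rw [hτ.2.1]
  have hτy : ∀ k ≤ K₂, (τ k).1 ≤ y := fun k hk => by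
    have := (coupling_mono hτ hk le_rfl).1
    rwa [hτKy] at this
  -- the invariant along the run
  have hP : ∀ t, (ρ t).1 ≤ K₁ ∧ (ρ t).2 ≤ K₂ ∧
      (σ (ρ t).1).1 = (τ (ρ t).2).1 ∧ m₀ ≤ (ρ t).1 := by
    intro t
    induction t with
    | zero =>
      rw [hρ0]
      exact ⟨hm₀K, Nat.zero_le _, by rw [hm₀x, hτ0x], le_rfl⟩
    | succ t ih =>
      obtain ⟨h1, h2, h3, h4⟩ := ih
      rw [hρs t, hFeq]
      by_cases hk : (ρ t).2 < K₂
      · rw [if_pos hk]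
        by_cases hw : (τ ((ρ t).2+1)).1 = (τ (ρ t).2).1
        · rw [if_pos hw]
          exact ⟨h1, by omega, by rw [hw]; exact h3, h4⟩
        · rw [if_neg hw]
          have hτstep : (τ ((ρ t).2+1)).1 = (τ (ρ t).2).1 + 1 := by
            rcases coupling_step hτ hk with hs | hs | hs <;> omega
          have hmlt : (ρ t).1 < K₁ := by
            rcases Nat.lt_or_ge (ρ t).1 K₁ with h | h
            · exact h
            · exfalso
              have hmeq : (ρ t).1 = K₁ := by omega
              have hy := hτy ((ρ t).2+1) (by omega)
              rw [hmeq, hσKb] at h3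
              omega
          by_cases hq : (σ ((ρ t).1+1)).1 = (σ (ρ t).1).1
          · rw [if_pos hq]
            exact ⟨by omega, by omega, by rw [hq]; exact h3, by omega⟩
          · rw [if_neg hq]
            have hp : (σ ((ρ t).1+1)).1 = (σ (ρ t).1).1 + 1 := by
              rcases coupling_step hσ hmlt with hs | hs | hs <;> omega
            exact ⟨by omega, by omega, by rw [hp, hτstep, h3], by omega⟩
      · rw [if_neg hk]
        exact ⟨h1, h2, h3, h4⟩
  -- progress
  have hsum : ∀ t, (ρ t).2 = K₂ ∨ m₀ + t ≤ (ρ t).1 + (ρ t).2 := by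
    intro t
    induction t with
    | zero => right; rw [hρ0]
    | succ t ih =>
      rw [hρs t, hFeq]
      by_cases hk : (ρ t).2 < K₂
      · rw [if_pos hk]
        have ihr : m₀ + t ≤ (ρ t).1 + (ρ t).2 := by
          rcases ih with h | h
          · omega
          · exact h
        by_cases hw : (τ ((ρ t).2+1)).1 = (τ (ρ t).2).1
        · rw [if_pos hw]; right; simp only; omega
        · rw [if_neg hw]
          by_cases hq : (σ ((ρ t).1+1)).1 = (σ (ρ t).1).1
          · rw [if_pos hq]; right; simp only; omega
          · rw [if_neg hq]; right; simp only; omega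
      · rw [if_neg hk]
        left
        have := (hP t).2.1
        omega
  set T : ℕ := K₁ + K₂ + 1 with hTdef
  have hT2 : (ρ T).2 = K₂ := by
    rcases hsum T with h | h
    · exact h
    · exfalso
      have h1 := (hP T).1
      have h2 := (hP T).2.1
      omega
  -- the merged weak coupling
  refine ⟨(σ m₀).2, (σ (ρ T).1).2, ?_, ?_, ?_, ?_⟩
  · rw [← hσ0c]
    exact (coupling_mono hσ (Nat.zero_le m₀) hm₀K).2
  · exact (coupling_mono hσ (hP T).2.2.2 (hP T).1).2
  · rw [← hσKd]
    exact (coupling_mono hσ (hP T).1 le_rfl).2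
  · refine weak_frechet q w (r₁ + r₂) _ v T
      (fun t => ((σ (ρ t).1).2, (τ (ρ t).2).2)) _ u ?_ ?_ ?_ ?_
    · beta_reduce
      rw [hρ0]
      simp [hτ0u]
    · beta_reduce
      rw [hT2, hτKv]
    · intro t ht
      beta_reduce
      by_cases hk : (ρ t).2 < K₂
      · have h3 := (hP t).2.2.1
        have h1 := (hP t).1
        have hmlt : ∀ (_ : (τ ((ρ t).2+1)).1 = (τ (ρ t).2).1 + 1), (ρ t).1 < K₁ := by
          intro hτstep
          rcases Nat.lt_or_ge (ρ t).1 K₁ with h | h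
          · exact h
          · exfalso
            have hmeq : (ρ t).1 = K₁ := by omega
            have hy := hτy ((ρ t).2+1) (by omega)
            rw [hmeq, hσKb] at h3
            omega
        rw [hρs t, hFeq, if_pos hk]
        by_cases hw : (τ ((ρ t).2+1)).1 = (τ (ρ t).2).1
        · rw [if_pos hw]
          have hτ2 : (τ ((ρ t).2+1)).2 = (τ (ρ t).2).2 + 1 := by
            rcases coupling_step hτ hk with hs | hs | hs <;> omega
          simp only [Prod.ext_iff, Prod.mk.injEq, Prod.fst, Prod.snd, true_and, and_true]
          omega
        · rw [if_neg hw]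
          have hτstep : (τ ((ρ t).2+1)).1 = (τ (ρ t).2).1 + 1 := by
            rcases coupling_step hτ hk with hs | hs | hs <;> omega
          have hm := hmlt hτstep
          have hτ2 : (τ ((ρ t).2+1)).2 = (τ (ρ t).2).2 ∨
              (τ ((ρ t).2+1)).2 = (τ (ρ t).2).2 + 1 := by
            rcases coupling_step hτ hk with hs | hs | hs <;> omega
          by_cases hq : (σ ((ρ t).1+1)).1 = (σ (ρ t).1).1
          · rw [if_pos hq]
            have hσ2 : (σ ((ρ t).1+1)).2 = (σ (ρ t).1).2 + 1 := by
              rcases coupling_step hσ hm with hs | hs | hs <;> omega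
            simp only [Prod.ext_iff, Prod.mk.injEq, Prod.fst, Prod.snd, true_and, and_true]
            omega
          · rw [if_neg hq]
            have hσ2 : (σ ((ρ t).1+1)).2 = (σ (ρ t).1).2 ∨
                (σ ((ρ t).1+1)).2 = (σ (ρ t).1).2 + 1 := by
              rcases coupling_step hσ hm with hs | hs | hs <;> omega
            simp only [Prod.ext_iff, Prod.mk.injEq, Prod.fst, Prod.snd, true_and, and_true]
            omega
      · left
        rw [hρs t, hFeq, if_neg hk]
    · intro t ht
      beta_reduce
      obtain ⟨h1, h2, h3, _⟩ := hP t
      calc dist (q (σ (ρ t).1).2) (w (τ (ρ t).2).2)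
          ≤ dist (q (σ (ρ t).1).2) (p (σ (ρ t).1).1) +
            dist (p (σ (ρ t).1).1) (w (τ (ρ t).2).2) := dist_triangle _ _ _
        _ ≤ r₁ + r₂ := by
            apply add_le_add
            · rw [dist_comm]; exact hσd (ρ t).1 h1
            · rw [h3]; exact hτd (ρ t).2 h2
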